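/- arXiv:1605.06425 — 8 statements merged into one kernel-verified Lean document; each statement's English description precedes it below -/
import Mathlib

section
/- Let R be a nontrivial idempotent semiring. Then R is simple if and only if for every nonzero x ∈ R there exists y ∈ R with 1 ≤ x·y (in the canonical order). -/
/-!
A saturated ideal containing a nonzero `x` with `1 ≤ x * y` contains `x * y`, hence `1`, hence
everything. Conversely, in an idempotent semiring every `x` lies in the saturated ideal
`{a | ∃ y, a ≤ x * y}`; if `x ≠ 0` and `R` is simple, this ideal is all of `R`, so it contains `1`.
-/

section

variable {R : Type*} [CommSemiring R]

/-- The order is encoded as `a ≤ b ↔ a + b = b`. -/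
structure IsSaturatedIdeal (I : Set R) : Prop where
  zero_mem : (0 : R) ∈ I
  add_mem : ∀ a b, a ∈ I → b ∈ I → a + b ∈ I
  mul_mem : ∀ r a, a ∈ I → r * a ∈ I
  mem_of_le : ∀ a b, a + b = b → b ∈ I → a ∈ I

namespace IsSaturatedIdeal

variable {I : Set R}

theorem one_mem_of_mem (hI : IsSaturatedIdeal I) {x y : R} (hx : x ∈ I)
    (hy : 1 + x * y = x * y) : (1 : R) ∈ I :=
  hI.mem_of_le 1 (x * y) hy (mul_comm y x ▸ hI.mul_mem y x hx)

theorem eq_univ_of_one_mem (hI : IsSaturatedIdeal I) (h1 : (1 : R) ∈ I) : I = Set.univ :=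
  Set.eq_univ_of_forall fun r => mul_one r ▸ hI.mul_mem r 1 h1

end IsSaturatedIdeal

/-- The saturation `{a | ∃ y, a ≤ x * y}` of the principal ideal `x R`. -/
def saturatedSpan (x : R) : Set R := {a | ∃ y, a + x * y = x * y}

theorem isSaturatedIdeal_saturatedSpan (x : R) : IsSaturatedIdeal (saturatedSpan x) where
  zero_mem := ⟨0, zero_add _⟩
  add_mem := by
    rintro a b ⟨y₁, h₁⟩ ⟨y₂, h₂⟩
    refine ⟨y₁ + y₂, ?_⟩
    calc a + b + x * (y₁ + y₂) = (a + x * y₁) + (b + x * y₂) := by ring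
      _ = x * (y₁ + y₂) := by rw [h₁, h₂, mul_add]
  mul_mem := by
    rintro r a ⟨y, h⟩
    refine ⟨r * y, ?_⟩
    calc r * a + x * (r * y) = r * (a + x * y) := by ring
      _ = x * (r * y) := by rw [h]; ring
  mem_of_le := by
    rintro a b hab ⟨y, h⟩
    refine ⟨y, ?_⟩
    calc a + x * y = (a + b) + x * y := by rw [add_assoc, h]
      _ = x * y := by rw [hab, h]

theorem self_mem_saturatedSpan (hidem : ∀ x : R, x + x = x) (x : R) : x ∈ saturatedSpan x :=
  ⟨1, by rw [mul_one, hidem]⟩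

theorem simple_iff_forall_ne_zero_exists_one_le (hidem : ∀ x : R, x + x = x) :
    (∀ I : Set R, IsSaturatedIdeal I → I = {0} ∨ I = Set.univ) ↔
      ∀ x : R, x ≠ 0 → ∃ y : R, 1 + x * y = x * y := by
  constructor
  · intro hsimple x hx
    have hxI := self_mem_saturatedSpan hidem x
    rcases hsimple _ (isSaturatedIdeal_saturatedSpan x) with h | h
    · rw [h] at hxI
      exact absurd hxI hx
    · have h1 : (1 : R) ∈ saturatedSpan x := h ▸ Set.mem_univ 1
      exact h1
  · intro hinv I hI
    refine or_iff_not_imp_left.2 fun hne => ?_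
    obtain ⟨x, hxI, hx⟩ : ∃ x ∈ I, x ≠ 0 := by
      by_contra! h
      exact hne (Set.eq_singleton_iff_unique_mem.2 ⟨hI.zero_mem, h⟩)
    obtain ⟨y, hy⟩ := hinv x hx
    exact hI.eq_univ_of_one_mem (hI.one_mem_of_mem hxI hy)

end

theorem statement0_general {R : Type*} [CommSemiring R]
    (hidem : ∀ x : R, x + x = x) :
    (∀ I : Set R,
        0 ∈ I →
        (∀ a b, a ∈ I → b ∈ I → a + b ∈ I) →
        (∀ r a, a ∈ I → r * a ∈ I) →
        (∀ a b, a + b = b → b ∈ I → a ∈ I) →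
        I = {0} ∨ I = Set.univ) ↔
      ∀ x : R, x ≠ 0 → ∃ y : R, 1 + x * y = x * y := by
  rw [← simple_iff_forall_ne_zero_exists_one_le hidem]
  exact forall_congr' fun I =>
    ⟨fun h hI => h hI.zero_mem hI.add_mem hI.mul_mem hI.mem_of_le,
      fun h h₀ hadd hmul hle => h ⟨h₀, hadd, hmul, hle⟩⟩

/-- Let `R` be a nontrivial idempotent (commutative) semiring.  `R` is
simple (its only saturated ideals are `{0}` and `R`) if and only if for every nonzero
`x ∈ R` there exists `y ∈ R` with `1 ≤ x * y` in the canonical order (`a ≤ b ↔ a + b = b`). -/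
theorem statement0 {R : Type*} [CommSemiring R] [Nontrivial R]
    (hidem : ∀ x : R, x + x = x) :
    (∀ I : Set R,
        0 ∈ I →
        (∀ a b, a ∈ I → b ∈ I → a + b ∈ I) →
        (∀ r a, a ∈ I → r * a ∈ I) →
        (∀ a b, a + b = b → b ∈ I → a ∈ I) →
        I = {0} ∨ I = Set.univ) ↔
      ∀ x : R, x ≠ 0 → ∃ y : R, 1 + x * y = x * y :=
  statement0_general hidem
end

section
/- Every unitgenerated idempotent semiring is simple. -/
/-!
A nonzero element `a` of a saturated ideal is a nonempty sum of units; by idempotence each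
summand `u` satisfies `u + a = a`, i.e. `u ≤ a`, so saturation puts the unit `u` in the ideal,
which is then everything.
-/

theorem Finset.add_sum_eq_sum_of_mem {R ι : Type*} [AddCommMonoid R]
    (hidem : ∀ x : R, x + x = x) {s : Finset ι} {f : ι → R} {i : ι} (hi : i ∈ s) :
    f i + ∑ j ∈ s, f j = ∑ j ∈ s, f j := by
  classical
  rw [← Finset.add_sum_erase s f hi, ← add_assoc, hidem]

theorem exists_unit_add_eq_of_ne_zero {R : Type*} [Semiring R]
    (hidem : ∀ x : R, x + x = x) {a : R} (hsum : ∃ (n : ℕ) (u : Fin n → Rˣ), a = ∑ i, (u i : R))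
    (ha : a ≠ 0) : ∃ u : Rˣ, (u : R) + a = a := by
  obtain ⟨n, u, rfl⟩ := hsum
  cases n with
  | zero => simp at ha
  | succ n =>
    exact ⟨u 0, Finset.add_sum_eq_sum_of_mem (f := fun i => (u i : R)) hidem (Finset.mem_univ 0)⟩

theorem Set.eq_univ_of_unit_mem {R : Type*} [Monoid R] {I : Set R}
    (hmul : ∀ r a, a ∈ I → r * a ∈ I) (u : Rˣ) (hu : (u : R) ∈ I) : I = Set.univ :=
  Set.eq_univ_of_forall fun x => by simpa using hmul (x * ↑u⁻¹) u hu

/-- Every unitgenerated idempotent (commutative) semiring is simple: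
if every element of `R` is a finite sum of multiplicative units, then every saturated
ideal of `R` is `{0}` or all of `R`. -/
theorem statement1 {R : Type*} [CommSemiring R]
    (hidem : ∀ x : R, x + x = x)
    (hug : ∀ x : R, ∃ (n : ℕ) (u : Fin n → Rˣ), x = ∑ i, (u i : R)) :
    ∀ I : Set R,
      0 ∈ I →
      (∀ a b, a ∈ I → b ∈ I → a + b ∈ I) →
      (∀ r a, a ∈ I → r * a ∈ I) →
      (∀ a b, a + b = b → b ∈ I → a ∈ I) →
      I = {0} ∨ I = Set.univ := by
  intro I h0 _ hmul hsat
  refine or_iff_not_imp_left.2 fun hI => ?_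
  obtain ⟨a, haI, ha0⟩ : ∃ a ∈ I, a ≠ 0 := by
    by_contra! h
    exact hI (Set.eq_singleton_iff_unique_mem.2 ⟨h0, h⟩)
  obtain ⟨u, hu⟩ := exists_unit_add_eq_of_ne_zero hidem (hug a) ha0
  exact Set.eq_univ_of_unit_mem hmul u (hsat _ _ hu haI)
end

section
/- Let R be a valuation subsemiring of a unitgenerated idempotent semiring K. Then the saturated ideals of R are totally ordered by inclusion: for any two saturated ideals I, J of R, either I ⊆ J or J ⊆ I. -/
/-!
Write `a ∈ I \ J` and `b ∈ J` as sums of units; by saturation every summand stays in its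
ideal, and since `a ∉ J` some summand `u` of `a` lies outside `J`. For each summand `v` of
`b`, the valuation property applied to `v u⁻¹` puts either `v = (v u⁻¹) u` in `I` or
`u = (v u⁻¹)⁻¹ v` in `J`; the latter is excluded, so all summands of `b`, hence `b`, lie in `I`.
-/

section IdempotentSemiring

variable {K : Type*} [CommSemiring K]

theorem add_sum_eq_sum_of_add_self {ι : Type*} [Fintype ι] [DecidableEq ι]
    (hidem : ∀ x : K, x + x = x) (f : ι → K) (i : ι) :
    f i + ∑ j, f j = ∑ j, f j := by
  rw [Fintype.sum_eq_add_sum_compl i f, ← add_assoc, hidem]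

theorem unit_summand_mem_of_sum_mem {R I : Set K} {n : ℕ} (hidem : ∀ x : K, x + x = x)
    (hsat : ∀ a b : K, a + b = b → b ∈ R → a ∈ R) (hIR : I ⊆ R)
    (hIsat : ∀ a b : K, a ∈ R → a + b = b → b ∈ I → a ∈ I)
    {u : Fin n → Kˣ} (hu : ∑ i, (u i : K) ∈ I) (i : Fin n) : (u i : K) ∈ I := by
  have hle := add_sum_eq_sum_of_add_self hidem (fun j => (u j : K)) i
  exact hIsat _ _ (hsat _ _ hle (hIR hu)) hle hu

theorem unit_mem_or_unit_mem_of_valuation {R I J : Set K}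
    (hval : ∀ x : Kˣ, (x : K) ∈ R ∨ ((x⁻¹ : Kˣ) : K) ∈ R)
    (hImul : ∀ r a : K, r ∈ R → a ∈ I → r * a ∈ I)
    (hJmul : ∀ r a : K, r ∈ R → a ∈ J → r * a ∈ J)
    {u v : Kˣ} (hu : (u : K) ∈ I) (hv : (v : K) ∈ J) : (v : K) ∈ I ∨ (u : K) ∈ J := by
  rcases hval (v * u⁻¹) with hR | hR
  · have h := hImul _ _ hR hu
    rw [← Units.val_mul, inv_mul_cancel_right] at h
    exact Or.inl h
  · have h := hJmul _ _ hR hv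
    rw [← Units.val_mul, show (v * u⁻¹)⁻¹ * v = u by group] at h
    exact Or.inr h

end IdempotentSemiring

theorem statement5_general {K : Type*} [CommSemiring K]
    (hidem : ∀ x : K, x + x = x)
    (hug : ∀ x : K, ∃ (n : ℕ) (u : Fin n → Kˣ), x = ∑ i, (u i : K))
    (R : Set K)
    (hsat : ∀ a b : K, a + b = b → b ∈ R → a ∈ R)
    (hval : ∀ x : Kˣ, (x : K) ∈ R ∨ ((x⁻¹ : Kˣ) : K) ∈ R)
    (I J : Set K)
    (hIR : I ⊆ R) (hI0 : (0 : K) ∈ I)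
    (hIadd : ∀ a b : K, a ∈ I → b ∈ I → a + b ∈ I)
    (hImul : ∀ r a : K, r ∈ R → a ∈ I → r * a ∈ I)
    (hIsat : ∀ a b : K, a ∈ R → a + b = b → b ∈ I → a ∈ I)
    (hJR : J ⊆ R) (hJ0 : (0 : K) ∈ J)
    (hJadd : ∀ a b : K, a ∈ J → b ∈ J → a + b ∈ J)
    (hJmul : ∀ r a : K, r ∈ R → a ∈ J → r * a ∈ J)
    (hJsat : ∀ a b : K, a ∈ R → a + b = b → b ∈ J → a ∈ J) :
    I ⊆ J ∨ J ⊆ I := by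
  refine or_iff_not_imp_left.mpr fun hIJ b hbJ => ?_
  obtain ⟨a, haI, haJ⟩ := Set.not_subset.mp hIJ
  obtain ⟨n, u, rfl⟩ := hug a
  obtain ⟨m, v, rfl⟩ := hug b
  obtain ⟨i, huJ⟩ : ∃ i, (u i : K) ∉ J := by
    by_contra! h
    exact haJ (Finset.sum_induction _ (· ∈ J) hJadd hJ0 fun i _ => h i)
  have huI := unit_summand_mem_of_sum_mem hidem hsat hIR hIsat haI i
  refine Finset.sum_induction _ (· ∈ I) hIadd hI0 fun j _ => ?_
  have hvJ := unit_summand_mem_of_sum_mem hidem hsat hJR hJsat hbJ j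
  exact (unit_mem_or_unit_mem_of_valuation hval hImul hJmul huI hvJ).resolve_right huJ

/-- Let `R` be a valuation subsemiring of a unitgenerated idempotent
semiring `K`.  Then the saturated ideals of `R` are totally ordered by inclusion. -/
theorem statement5 {K : Type*} [CommSemiring K]
    (hidem : ∀ x : K, x + x = x)
    (hug : ∀ x : K, ∃ (n : ℕ) (u : Fin n → Kˣ), x = ∑ i, (u i : K))
    (R : Set K)
    (h0 : (0 : K) ∈ R) (h1 : (1 : K) ∈ R)
    (hadd : ∀ a b : K, a ∈ R → b ∈ R → a + b ∈ R)
    (hmul : ∀ a b : K, a ∈ R → b ∈ R → a * b ∈ R)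
    (hsat : ∀ a b : K, a + b = b → b ∈ R → a ∈ R)
    (hval : ∀ x : Kˣ, (x : K) ∈ R ∨ ((x⁻¹ : Kˣ) : K) ∈ R)
    (I J : Set K)
    (hIR : I ⊆ R) (hI0 : (0 : K) ∈ I)
    (hIadd : ∀ a b : K, a ∈ I → b ∈ I → a + b ∈ I)
    (hImul : ∀ r a : K, r ∈ R → a ∈ I → r * a ∈ I)
    (hIsat : ∀ a b : K, a ∈ R → a + b = b → b ∈ I → a ∈ I)
    (hJR : J ⊆ R) (hJ0 : (0 : K) ∈ J)
    (hJadd : ∀ a b : K, a ∈ J → b ∈ J → a + b ∈ J)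
    (hJmul : ∀ r a : K, r ∈ R → a ∈ J → r * a ∈ J)
    (hJsat : ∀ a b : K, a ∈ R → a + b = b → b ∈ J → a ∈ J) :
    I ⊆ J ∨ J ⊆ I :=
  statement5_general hidem hug R hsat hval I J hIR hI0 hIadd hImul hIsat hJR hJ0 hJadd hJmul hJsat
end

section
/- Let R be a simple idempotent semiring. Then every radical congruence on R is QC, i.e. its quotient is multiplicatively cancellative. -/
/-!
The class of `0` under a congruence is a saturated ideal, so in a simple semiring it is `{0}`
for every prime congruence (it cannot be everything, as `0 ≁ 1`). A prime congruence is
cancellative on its own: `s x + 0 y ∼ s y + 0 x` forces `s ∼ 0` or `x ∼ y`. Hence for `s ≠ 0`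
each prime congruence containing `c` cancels `s`, and so does their intersection `c`.
-/

/-- A congruence on a semiring, as a relation: an equivalence relation compatible with
addition and multiplication. -/
def IsCong {R : Type*} [Add R] [Mul R] (r : R → R → Prop) : Prop :=
  Equivalence r ∧ (∀ a b c d, r a b → r c d → r (a + c) (b + d)) ∧
    ∀ a b c d, r a b → r c d → r (a * c) (b * d)

/-- A prime congruence: `0` is not congruent to `1`, and whenever
`x*y + z*w ∼ x*w + z*y`, either `x ∼ z` or `y ∼ w`. -/
def IsPrimeCong {R : Type*} [Add R] [Mul R] [Zero R] [One R] (r : R → R → Prop) : Prop :=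
  ¬ r 0 1 ∧ ∀ x y z w, r (x * y + z * w) (x * w + z * y) → r x z ∨ r y w

section

variable {R : Type*} [Semiring R]

def IsSaturatedIdeal_s6 (I : Set R) : Prop :=
  0 ∈ I ∧ (∀ a b, a ∈ I → b ∈ I → a + b ∈ I) ∧ (∀ r a, a ∈ I → r * a ∈ I) ∧
    ∀ a b, a + b = b → b ∈ I → a ∈ I

theorem IsCong.isSaturatedIdeal_setOf_rel_zero {p : R → R → Prop} (hp : IsCong p) :
    IsSaturatedIdeal_s6 {a | p a 0} := by
  obtain ⟨hequiv, hadd, hmul⟩ := hp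
  refine ⟨hequiv.refl 0, fun a b ha hb => ?_, fun r a ha => ?_, fun a b hab hb => ?_⟩
  · simpa only [Set.mem_ofPred_eq, add_zero] using hadd a 0 b 0 ha hb
  · simpa only [Set.mem_ofPred_eq, mul_zero] using hmul r r a 0 (hequiv.refl r) ha
  · have h : p (a + b) (a + 0) := hadd a a b 0 (hequiv.refl a) hb
    rw [hab, add_zero] at h
    exact hequiv.trans (hequiv.symm h) hb

theorem IsPrimeCong.rel_of_rel_mul {p : R → R → Prop} (hp : IsPrimeCong p) {s x y : R}
    (hs : ¬ p s 0) (hsxy : p (s * x) (s * y)) : p x y :=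
  (hp.2 s x 0 y (by simpa only [zero_mul, add_zero] using hsxy)).resolve_left hs

theorem IsPrimeCong.eq_zero_of_rel_zero
    (hsimple : ∀ I : Set R, IsSaturatedIdeal_s6 I → I = {0} ∨ I = Set.univ)
    {p : R → R → Prop} (hcong : IsCong p) (hprime : IsPrimeCong p) {a : R} (ha : p a 0) :
    a = 0 := by
  rcases hsimple _ hcong.isSaturatedIdeal_setOf_rel_zero with h | h
  · exact Set.eq_of_mem_singleton (h ▸ ha)
  · have h10 : p 1 0 := show (1 : R) ∈ {a | p a 0} from h ▸ Set.mem_univ 1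
    exact absurd (hcong.1.symm h10) hprime.1

end

theorem statement6_general {R : Type*} [CommSemiring R]
    (hsimple : ∀ I : Set R,
      0 ∈ I →
      (∀ a b, a ∈ I → b ∈ I → a + b ∈ I) →
      (∀ r a, a ∈ I → r * a ∈ I) →
      (∀ a b, a + b = b → b ∈ I → a ∈ I) →
      I = {0} ∨ I = Set.univ)
    (c : R → R → Prop)
    (hradical : ∃ S : Set (R → R → Prop),
      (∀ p ∈ S, IsCong p ∧ IsPrimeCong p) ∧ ∀ x y, c x y ↔ ∀ p ∈ S, p x y) :
    ∀ s x y : R, ¬ c s 0 → c (s * x) (s * y) → c x y := by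
  obtain ⟨S, hS, hc⟩ := hradical
  intro s x y hs hsxy
  have hsimple' : ∀ I : Set R, IsSaturatedIdeal_s6 I → I = {0} ∨ I = Set.univ :=
    fun I ⟨h0, hadd, hmul, hsat⟩ => hsimple I h0 hadd hmul hsat
  have hs0 : s ≠ 0 := by
    rintro rfl
    exact hs ((hc 0 0).mpr fun p hp => (hS p hp).1.1.refl 0)
  rw [hc]
  intro p hp
  obtain ⟨hcong, hprime⟩ := hS p hp
  exact hprime.rel_of_rel_mul (fun h => hs0 (hprime.eq_zero_of_rel_zero hsimple' hcong h))
    ((hc _ _).mp hsxy p hp)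

/-- Let `R` be a simple idempotent semiring.  Then every radical
congruence on `R` (an intersection of prime congruences) is QC: its quotient is
multiplicatively cancellative, i.e. `s*x ∼ s*y` with `s` not congruent to `0` implies
`x ∼ y`. -/
theorem statement6 {R : Type*} [CommSemiring R]
    (hidem : ∀ x : R, x + x = x)
    (hsimple : ∀ I : Set R,
      0 ∈ I →
      (∀ a b, a ∈ I → b ∈ I → a + b ∈ I) →
      (∀ r a, a ∈ I → r * a ∈ I) →
      (∀ a b, a + b = b → b ∈ I → a ∈ I) →
      I = {0} ∨ I = Set.univ)
    (c : R → R → Prop)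
    (hradical : ∃ S : Set (R → R → Prop),
      (∀ p ∈ S, IsCong p ∧ IsPrimeCong p) ∧ ∀ x y, c x y ↔ ∀ p ∈ S, p x y) :
    ∀ s x y : R, ¬ c s 0 → c (s * x) (s * y) → c x y :=
  statement6_general hsimple c hradical
end

section
/- Let R be an idempotent semiring, A an R-algebra which is an idempotent semiring, and x ∈ A. Then x is integral over R if and only if there exist an integer n ≥ 2 and elements c_0, …, c_{n-1} ∈ R such that x^n ≤ c_0•1 + c_1•x + … + c_{n-1}•x^{n-1} in the canonical order of A. -/
/-- A saturated subsemiring of an idempotent semiring `A`: a subsemiring (as a set)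
that is saturated for the canonical order `a ≤ b ↔ a + b = b`. -/
def IsSatSubsemiring {A : Type*} [CommSemiring A] (S : Set A) : Prop :=
  0 ∈ S ∧ 1 ∈ S ∧ (∀ a b, a ∈ S → b ∈ S → a + b ∈ S) ∧
    (∀ a b, a ∈ S → b ∈ S → a * b ∈ S) ∧ ∀ a b, a + b = b → b ∈ S → a ∈ S

/-- `R⟨x⟩`: the smallest saturated subsemiring of `A` containing `x` and the image
of `R`. -/
def satGen (R : Type*) {A : Type*} [CommSemiring R] [CommSemiring A] [Algebra R A]
    (x : A) : Set A :=
  ⋂₀ {S : Set A | IsSatSubsemiring S ∧ x ∈ S ∧ Set.range (algebraMap R A) ⊆ S}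

/-- `x ∈ A` is integral over `R` if `R⟨x⟩` is a finite `R`-module: there is some
`m ∈ R⟨x⟩` such that every `y ∈ R⟨x⟩` satisfies `y ≤ r • m` for some `r ∈ R`. -/
def IsIntegralOne (R : Type*) {A : Type*} [CommSemiring R] [CommSemiring A] [Algebra R A]
    (x : A) : Prop :=
  ∃ m ∈ satGen R x, ∀ y ∈ satGen R x, ∃ r : R, y + r • m = r • m

/-- `x ∈ A` is quasiintegral over `R` if there exists an `R⟨x⟩`-submodule `M ⊆ A` which
is finite as an `R`-module and faithful as an `R⟨x⟩`-module. -/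
def IsQuasiIntegralOne (R : Type*) {A : Type*} [CommSemiring R] [CommSemiring A]
    [Algebra R A] (x : A) : Prop :=
  ∃ M : Set A,
    0 ∈ M ∧ (∀ a b, a ∈ M → b ∈ M → a + b ∈ M) ∧
    (∀ t ∈ satGen R x, ∀ m ∈ M, t * m ∈ M) ∧
    (∃ m₀ ∈ M, ∀ y ∈ M, ∃ r : R, y + r • m₀ = r • m₀) ∧
    ∀ t ∈ satGen R x, t ≠ 0 → ∃ m ∈ M, t * m ≠ 0

/-!
If `x ^ n ≤ ∑_{i<n} c i • x ^ i`, take `m = 1 + x + ⋯ + x ^ (n-1)`: then `x * m ≤ (1 + ∑ c i) • m`,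
so the `b` with `b * m ≤ r • m` for some `r` form a saturated subsemiring containing `x` and `R`,
hence all of `R⟨x⟩`; as `1 ≤ m`, every such `b` is itself `≤ r • m`. Conversely `R⟨x⟩` lies below
the polynomial expressions in `x`, so `m ≤ p(x)`, and `x ^ n ≤ r • m ≤ r • p(x)` once `n` exceeds
the degree of `p`.
-/

section CanonicalOrder

variable {A : Type*} [CommSemiring A] {a b c d : A}

theorem add_eq_trans (hab : a + b = b) (hbc : b + c = c) : a + c = c := by
  rw [← hbc, ← add_assoc, hab]

theorem mul_add_mul_eq_of_add_eq (hab : a + b = b) (hcd : c + d = d) :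
    a * c + b * d = b * d := by
  have hac : a * c + b * c = b * c := by rw [← add_mul, hab]
  have hbd : b * c + b * d = b * d := by rw [← mul_add, hcd]
  exact add_eq_trans hac hbd

theorem add_sum_eq_of_mem (hA : ∀ a : A, a + a = a) {ι : Type*} {s : Finset ι} (f : ι → A)
    {i : ι} (hi : i ∈ s) : f i + ∑ j ∈ s, f j = ∑ j ∈ s, f j := by
  classical
  rw [← Finset.add_sum_erase s f hi, ← add_assoc, hA]

end CanonicalOrder

section SatGen

variable {R A : Type*} [CommSemiring R] [CommSemiring A] [Algebra R A] {x : A}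

theorem satGen_subset {S : Set A} (hS : IsSatSubsemiring S) (hx : x ∈ S)
    (hR : Set.range (algebraMap R A) ⊆ S) : satGen R x ⊆ S :=
  Set.sInter_subset_of_mem ⟨hS, hx, hR⟩

theorem self_mem_satGen : x ∈ satGen R x :=
  Set.mem_sInter.2 fun _ hS ↦ hS.2.1

theorem isSatSubsemiring_satGen : IsSatSubsemiring (satGen R x) := by
  refine ⟨?_, ?_, ?_, ?_, ?_⟩ <;> simp only [satGen, Set.mem_sInter]
  · exact fun S hS ↦ hS.1.1
  · exact fun S hS ↦ hS.1.2.1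
  · exact fun a b ha hb S hS ↦ hS.1.2.2.1 a b (ha S hS) (hb S hS)
  · exact fun a b ha hb S hS ↦ hS.1.2.2.2.1 a b (ha S hS) (hb S hS)
  · exact fun a b hab hb S hS ↦ hS.1.2.2.2.2 a b hab (hb S hS)

theorem pow_mem_satGen (k : ℕ) : x ^ k ∈ satGen R x := by
  induction k with
  | zero => simpa using isSatSubsemiring_satGen.2.1
  | succ k ih => rw [pow_succ]; exact isSatSubsemiring_satGen.2.2.2.1 _ _ ih self_mem_satGen

end SatGen

section Saturation

variable {A : Type*} [CommSemiring A]

theorem isSatSubsemiring_saturation (hA : ∀ a : A, a + a = a) (S : Subsemiring A) :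
    IsSatSubsemiring {a : A | ∃ s ∈ S, a + s = s} := by
  refine ⟨⟨0, S.zero_mem, add_zero 0⟩, ⟨1, S.one_mem, hA 1⟩, ?_, ?_, ?_⟩
  · rintro a b ⟨s, hs, has⟩ ⟨t, ht, hbt⟩
    exact ⟨s + t, S.add_mem hs ht, by rw [add_add_add_comm, has, hbt]⟩
  · rintro a b ⟨s, hs, has⟩ ⟨t, ht, hbt⟩
    exact ⟨s * t, S.mul_mem hs ht, mul_add_mul_eq_of_add_eq has hbt⟩
  · rintro a b hab ⟨s, hs, hbs⟩
    exact ⟨s, hs, add_eq_trans hab hbs⟩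

end Saturation

section BoundedBy

variable (R : Type*) {A : Type*} [CommSemiring R] [CommSemiring A] [Algebra R A]

def boundedBy (m : A) : Submodule R A where
  carrier := {a | ∃ r : R, a + r • m = r • m}
  zero_mem' := ⟨0, by simp⟩
  add_mem' := by
    rintro a b ⟨r, har⟩ ⟨s, hbs⟩
    exact ⟨r + s, by rw [add_smul, add_add_add_comm, har, hbs]⟩
  smul_mem' := by
    rintro s a ⟨r, har⟩
    exact ⟨s * r, by rw [mul_smul, ← smul_add, har]⟩

variable {R} {m a b : A}

theorem mem_boundedBy_of_add_eq (hab : a + b = b) (hb : b ∈ boundedBy R m) :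
    a ∈ boundedBy R m :=
  let ⟨r, hbr⟩ := hb
  ⟨r, add_eq_trans hab hbr⟩

theorem self_mem_boundedBy (hA : ∀ a : A, a + a = a) : m ∈ boundedBy R m :=
  ⟨1, by rw [one_smul, hA]⟩

theorem mul_mem_boundedBy (ha : a ∈ boundedBy R m) (hb : b * m ∈ boundedBy R m) :
    b * a ∈ boundedBy R m := by
  obtain ⟨r, har⟩ := ha
  have hle : b * a + r • (b * m) = r • (b * m) := by
    rw [← mul_smul_comm, ← mul_add, har]
  exact mem_boundedBy_of_add_eq hle ((boundedBy R m).smul_mem r hb)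

theorem isSatSubsemiring_setOf_mul_mem_boundedBy (hm : m ∈ boundedBy R m) :
    IsSatSubsemiring {b : A | b * m ∈ boundedBy R m} := by
  refine ⟨by simp, by simpa using hm, ?_, ?_, ?_⟩
  · intro a b ha hb
    simpa only [Set.mem_ofPred_eq, add_mul] using (boundedBy R m).add_mem ha hb
  · intro a b ha hb
    simpa only [Set.mem_ofPred_eq, mul_assoc] using mul_mem_boundedBy hb ha
  · intro a b hab hb
    exact mem_boundedBy_of_add_eq (by rw [← add_mul, hab]) hb

theorem satGen_subset_boundedBy (hA : ∀ a : A, a + a = a) {x : A}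
    (hx : x * m ∈ boundedBy R m) (hone : 1 + m = m) : satGen R x ⊆ boundedBy R m := by
  have hm := self_mem_boundedBy (R := R) hA (m := m)
  have hsub : satGen R x ⊆ {b : A | b * m ∈ boundedBy R m} := by
    refine satGen_subset (isSatSubsemiring_setOf_mul_mem_boundedBy hm) hx ?_
    rintro _ ⟨r, rfl⟩
    simpa only [Set.mem_ofPred_eq, ← Algebra.smul_def] using (boundedBy R m).smul_mem r hm
  intro b hb
  exact mem_boundedBy_of_add_eq (by rw [add_comm, ← mul_add_one, add_comm, hone]) (hsub hb)

end BoundedBy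

section Integral

variable {R A : Type*} [CommSemiring R] [CommSemiring A] [Algebra R A] {x : A}

theorem exists_add_aeval_eq_of_mem_satGen (hA : ∀ a : A, a + a = a) {a : A}
    (ha : a ∈ satGen R x) :
    ∃ p : Polynomial R, a + Polynomial.aeval x p = Polynomial.aeval x p := by
  have hsub := satGen_subset (R := R) (x := x)
    (isSatSubsemiring_saturation hA (Polynomial.aeval x).range.toSubsemiring)
    ⟨x, ⟨Polynomial.X, Polynomial.aeval_X x⟩, hA x⟩
    (by rintro _ ⟨r, rfl⟩; exact ⟨_, ⟨Polynomial.C r, Polynomial.aeval_C x r⟩, hA _⟩)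
  obtain ⟨_, ⟨p, rfl⟩, hp⟩ := hsub ha
  exact ⟨p, hp⟩

theorem exists_pow_le_of_isIntegralOne (hA : ∀ a : A, a + a = a) (h : IsIntegralOne R x) :
    ∃ n : ℕ, 2 ≤ n ∧ ∃ c : Fin n → R,
      x ^ n + ∑ i : Fin n, c i • x ^ (i : ℕ) = ∑ i : Fin n, c i • x ^ (i : ℕ) := by
  obtain ⟨m, hm, hbound⟩ := h
  obtain ⟨p, hmp⟩ := exists_add_aeval_eq_of_mem_satGen hA hm
  set n := max (p.natDegree + 1) 2
  obtain ⟨r, hxr⟩ := hbound (x ^ n) (pow_mem_satGen n)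
  have hexpand : r • Polynomial.aeval x p = ∑ i : Fin n, (r * p.coeff i) • x ^ (i : ℕ) := by
    rw [Polynomial.aeval_eq_sum_range' (by omega : p.natDegree < n), Finset.smul_sum,
      ← Fin.sum_univ_eq_sum_range]
    simp only [smul_smul]
  refine ⟨n, le_max_right _ _, fun i ↦ r * p.coeff i, ?_⟩
  rw [← hexpand]
  exact add_eq_trans hxr (by rw [← smul_add, hmp])

theorem isIntegralOne_of_pow_le (hA : ∀ a : A, a + a = a) {n : ℕ} (hn : 1 ≤ n) (c : Fin n → R)
    (hc : x ^ n + ∑ i : Fin n, c i • x ^ (i : ℕ) = ∑ i : Fin n, c i • x ^ (i : ℕ)) :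
    IsIntegralOne R x := by
  set m := ∑ i : Fin n, x ^ (i : ℕ)
  have hpow_lt (i : ℕ) (hi : i < n) : x ^ i ∈ boundedBy R m :=
    mem_boundedBy_of_add_eq (add_sum_eq_of_mem hA (fun j : Fin n ↦ x ^ (j : ℕ))
      (Finset.mem_univ ⟨i, hi⟩)) (self_mem_boundedBy hA)
  have hpow_le (i : ℕ) (hi : i ≤ n) : x ^ i ∈ boundedBy R m := by
    rcases hi.lt_or_eq with hi | rfl
    · exact hpow_lt i hi
    · exact mem_boundedBy_of_add_eq hc (Submodule.sum_mem _ fun i _ ↦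
        Submodule.smul_mem _ _ (hpow_lt i i.isLt))
  have hx : x * m ∈ boundedBy R m := by
    rw [Finset.mul_sum]
    exact Submodule.sum_mem _ fun i _ ↦ by rw [← pow_succ']; exact hpow_le _ i.isLt
  have hone : 1 + m = m := by
    simpa using add_sum_eq_of_mem hA (fun j : Fin n ↦ x ^ (j : ℕ)) (Finset.mem_univ ⟨0, hn⟩)
  have hm : m ∈ satGen R x :=
    Finset.sum_induction _ (· ∈ satGen R x) isSatSubsemiring_satGen.2.2.1
      isSatSubsemiring_satGen.1 fun i _ ↦ pow_mem_satGen i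
  exact ⟨m, hm, fun y hy ↦ satGen_subset_boundedBy hA hx hone hy⟩

end Integral

theorem statement10_general {R A : Type*} [CommSemiring R] [CommSemiring A] [Algebra R A]
    (hA : ∀ a : A, a + a = a) (x : A) :
    IsIntegralOne R x ↔
      ∃ n : ℕ, 2 ≤ n ∧ ∃ c : Fin n → R,
        x ^ n + ∑ i : Fin n, c i • x ^ (i : ℕ) = ∑ i : Fin n, c i • x ^ (i : ℕ) :=
  ⟨exists_pow_le_of_isIntegralOne hA,
    fun ⟨_, hn, c, hc⟩ ↦ isIntegralOne_of_pow_le hA (by omega) c hc⟩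

/-- Let `R` be an idempotent semiring, `A` an `R`-algebra which is an
idempotent semiring, `x ∈ A`.  Then `x` is integral over `R` iff there are `n ≥ 2` and
`c_0, …, c_{n-1} ∈ R` with `x^n ≤ c_0•1 + c_1•x + … + c_{n-1}•x^{n-1}` in the canonical
order of `A`. -/
theorem statement10 {R A : Type*} [CommSemiring R] [CommSemiring A] [Algebra R A]
    (hR : ∀ r : R, r + r = r) (hA : ∀ a : A, a + a = a) (x : A) :
    IsIntegralOne R x ↔
      ∃ n : ℕ, 2 ≤ n ∧ ∃ c : Fin n → R,
        x ^ n + ∑ i : Fin n, c i • x ^ (i : ℕ) = ∑ i : Fin n, c i • x ^ (i : ℕ) :=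
  statement10_general hA x
end

section
/- Let R be an idempotent semiring and A an R-algebra which is an idempotent semifield. Then every element of A that is quasiintegral over R is integral over R. -/
/-! Faithfulness applied to `1 ∈ R⟨x⟩` forces the element `m₀` bounding the finite module `M`
to be nonzero, hence a unit of `A`. For `y ∈ R⟨x⟩` the product `y * m₀` lies in `M`, so
`y * m₀ ≤ r • m₀` for some `r`; multiplying by `m₀⁻¹` gives `y ≤ r • 1`, i.e. `1` bounds `R⟨x⟩`. -/

theorem one_mem_satGen (R : Type*) {A : Type*} [CommSemiring R] [CommSemiring A] [Algebra R A]
    (x : A) : (1 : A) ∈ satGen R x :=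
  fun _ hS => hS.1.2.1

theorem ne_zero_of_forall_add_smul_eq {R A : Type*} [Semiring R] [AddCommMonoid A]
    [Module R A] {M : Set A} {m₀ : A} (hbound : ∀ y ∈ M, ∃ r : R, y + r • m₀ = r • m₀)
    {m : A} (hm : m ∈ M) (hne : m ≠ 0) : m₀ ≠ 0 := by
  rintro rfl
  obtain ⟨r, hr⟩ := hbound m hm
  rw [smul_zero, add_zero] at hr
  exact hne hr

theorem IsUnit.add_smul_one_eq_smul_one_of_mul {R A : Type*} [Semiring R] [Semiring A]
    [Module R A] [IsScalarTower R A A] {u y : A} {r : R} (hu : IsUnit u)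
    (h : y * u + r • u = r • u) : y + r • (1 : A) = r • 1 := by
  obtain ⟨v, hv⟩ := hu.exists_right_inv
  simpa only [add_mul, mul_assoc, hv, mul_one, smul_mul_assoc] using congrArg (· * v) h

theorem statement14_general {R A : Type*} [CommSemiring R] [CommSemiring A] [Algebra R A]
    [Nontrivial A]
    (hunits : ∀ a : A, a ≠ 0 → IsUnit a)
    (x : A) (hx : IsQuasiIntegralOne R x) :
    IsIntegralOne R x := by
  obtain ⟨M, -, -, hmul, ⟨m₀, hm₀M, hbound⟩, hfaith⟩ := hx
  obtain ⟨m, hmM, hm⟩ := hfaith 1 (one_mem_satGen R x) one_ne_zero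
  have hm₀ : m₀ ≠ 0 := ne_zero_of_forall_add_smul_eq hbound hmM (by rwa [one_mul] at hm)
  refine ⟨1, one_mem_satGen R x, fun y hy => ?_⟩
  obtain ⟨r, hr⟩ := hbound (y * m₀) (hmul y hy m₀ hm₀M)
  exact ⟨r, (hunits m₀ hm₀).add_smul_one_eq_smul_one_of_mul hr⟩

/-- Let `R` be an idempotent semiring and `A` an `R`-algebra which is an
idempotent semifield (nontrivial, with every nonzero element a unit).  Then every
element of `A` that is quasiintegral over `R` is integral over `R`. -/
theorem statement14 {R A : Type*} [CommSemiring R] [CommSemiring A] [Algebra R A]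
    [Nontrivial A]
    (hR : ∀ r : R, r + r = r) (hA : ∀ a : A, a + a = a)
    (hunits : ∀ a : A, a ≠ 0 → IsUnit a)
    (x : A) (hx : IsQuasiIntegralOne R x) :
    IsIntegralOne R x :=
  statement14_general hunits x hx
end

section
/- Let R be an idempotent semiring and S ⊆ R × R. If every finite subset of S is admissible, then S is admissible. -/
/-
Compactness by an ultraproduct. For every finite `F ⊆ S` choose a homomorphism
`v_F : R → (Γ_F)_max` witnessing admissibility of `F`, and an ultrafilter `U` on the finite
subsets of `S` refining `atTop`, so that each pair of `S` lies in `U`-almost every `F`.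
The ultraproduct `∏ Γ_F / U` is again a linearly ordered abelian group, and `(∏ Γ_F / U)_max`
is the ultraproduct of the `(Γ_F)_max`. The map `r ↦ [v_F r]_U` is then a homomorphism,
because each defining identity holds coordinatewise, and it satisfies every strict inequality
`v y < v x` required by `S`, because that inequality holds for almost every `F`.
-/

universe u

/-- A subset `S ⊆ R × R` is admissible if there exist a linearly ordered abelian group
`Γ` and a homomorphism `v : R → Γ_max` (with `Γ_max = WithZero Γ`, addition being `max`)
such that `v y < v x` for all `(x, y) ∈ S`. -/
def IsAdmissible {R : Type u} [CommSemiring R] (S : Set (R × R)) : Prop :=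
  ∃ (Γ : Type u) (_ : CommGroup Γ) (_ : LinearOrder Γ) (_ : IsOrderedMonoid Γ) (v : R → WithZero Γ),
    v 0 = 0 ∧ v 1 = 1 ∧ (∀ a b, v (a * b) = v a * v b) ∧
    (∀ a b, v (a + b) = max (v a) (v b)) ∧
    ∀ p ∈ S, v p.2 < v p.1

open Filter

namespace Filter

variable {ι : Type*} (l : Filter ι) (Γ : ι → Type*)

def eventuallyOneSubgroup [∀ i, CommGroup (Γ i)] : Subgroup (∀ i, Γ i) where
  carrier := {a | ∀ᶠ i in l, a i = 1}
  mul_mem' ha hb := by filter_upwards [ha, hb] with i hai hbi; simp [hai, hbi]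
  one_mem' := Eventually.of_forall fun _ => rfl
  inv_mem' ha := by filter_upwards [ha] with i hi; simp [hi]

def eventuallyOneLESubmonoid [∀ i, CommMonoid (Γ i)] [∀ i, Preorder (Γ i)]
    [∀ i, IsOrderedMonoid (Γ i)] : Submonoid (∀ i, Γ i) where
  carrier := {a | ∀ᶠ i in l, 1 ≤ a i}
  mul_mem' ha hb := by filter_upwards [ha, hb] with i hai hbi; exact one_le_mul hai hbi
  one_mem' := Eventually.of_forall fun _ => le_rfl

end Filter

namespace Ultrafilter

variable {ι : Type*} (U : Ultrafilter ι) (Γ : ι → Type*) [∀ i, CommGroup (Γ i)]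

def GroupUltraproduct : Type _ := (∀ i, Γ i) ⧸ (U : Filter ι).eventuallyOneSubgroup Γ

namespace GroupUltraproduct

instance : CommGroup (U.GroupUltraproduct Γ) :=
  inferInstanceAs (CommGroup (_ ⧸ _))

variable {U Γ}

def mk : (∀ i, Γ i) →* U.GroupUltraproduct Γ := QuotientGroup.mk' _

lemma mk_surjective : Function.Surjective (mk : (∀ i, Γ i) → U.GroupUltraproduct Γ) :=
  QuotientGroup.mk'_surjective _

lemma mk_eq_mk_iff {a b : ∀ i, Γ i} : mk (U := U) a = mk b ↔ ∀ᶠ i in U, a i = b i := by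
  refine (QuotientGroup.eq (s := (U : Filter ι).eventuallyOneSubgroup Γ)).trans ?_
  refine eventually_congr (Eventually.of_forall fun i => ?_)
  simp [inv_mul_eq_one]

section Order

variable [∀ i, LinearOrder (Γ i)]

lemma eventually_one_le_of_mk_eq {a b : ∀ i, Γ i} (hab : mk (U := U) a = mk b)
    (ha : ∀ᶠ i in U, 1 ≤ a i) : ∀ᶠ i in U, 1 ≤ b i := by
  filter_upwards [ha, mk_eq_mk_iff.1 hab] with i hai hi
  rwa [← hi]

variable [∀ i, IsOrderedMonoid (Γ i)]

variable (U Γ) in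
def oneLECone : GroupCone (U.GroupUltraproduct Γ) where
  __ := ((U : Filter ι).eventuallyOneLESubmonoid Γ).map mk
  eq_one_of_mem_of_inv_mem' := by
    rintro _ ⟨a, ha, rfl⟩ ⟨b, hb, hab⟩
    have ha' : ∀ᶠ i in U, 1 ≤ (a i)⁻¹ :=
      eventually_one_le_of_mk_eq (a := b) (hab.trans (map_inv mk a).symm) hb
    rw [← map_one mk, mk_eq_mk_iff]
    filter_upwards [ha, ha'] with i h1 h2
    exact le_antisymm (one_le_inv'.1 h2) h1

lemma mk_mem_oneLECone_iff {a : ∀ i, Γ i} : mk a ∈ oneLECone U Γ ↔ ∀ᶠ i in U, 1 ≤ a i :=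
  ⟨fun ⟨_, hb, hba⟩ => eventually_one_le_of_mk_eq hba hb, fun ha => ⟨a, ha, rfl⟩⟩

instance : HasMemOrInvMem (oneLECone U Γ) where
  mem_or_inv_mem x := by
    obtain ⟨a, rfl⟩ := mk_surjective x
    rw [← map_inv, mk_mem_oneLECone_iff, mk_mem_oneLECone_iff, ← Ultrafilter.eventually_or]
    exact Eventually.of_forall fun i => (le_total 1 (a i)).imp id one_le_inv'.2

noncomputable instance : LinearOrder (U.GroupUltraproduct Γ) :=
  open Classical in LinearOrder.mkOfGroupCone (oneLECone U Γ)

instance : IsOrderedMonoid (U.GroupUltraproduct Γ) := IsOrderedMonoid.mkOfCone (oneLECone U Γ)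

lemma mk_le_mk_iff {a b : ∀ i, Γ i} : mk (U := U) a ≤ mk b ↔ ∀ᶠ i in U, a i ≤ b i := by
  change mk b / mk a ∈ oneLECone U Γ ↔ _
  rw [← map_div, mk_mem_oneLECone_iff]
  simp only [Pi.div_apply, one_le_div']

end Order

lemma eventually_eq_zero_or_exists_eventually_eq_coe (a : ∀ i, WithZero (Γ i)) :
    (∀ᶠ i in U, a i = 0) ∨ ∃ b : ∀ i, Γ i, ∀ᶠ i in U, a i = b i := by
  refine (U.em fun i => a i = 0).imp_right fun h => ?_
  have hcoe : ∀ i, ∃ g : Γ i, a i ≠ 0 → a i = g := fun i => by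
    by_cases h0 : a i = 0
    · exact ⟨1, fun h => absurd h0 h⟩
    · obtain ⟨g, hg⟩ := WithZero.ne_zero_iff_exists.1 h0
      exact ⟨g, fun _ => hg.symm⟩
  choose b hb using hcoe
  exact ⟨b, h.mono hb⟩

open Classical in
/-- Models the ultraproduct of the `WithZero (Γ i)` as `WithZero` of the ultraproduct. -/
noncomputable def withZeroMk (a : ∀ i, WithZero (Γ i)) : WithZero (U.GroupUltraproduct Γ) :=
  if h : ∃ b : ∀ i, Γ i, ∀ᶠ i in U, a i = b i then ↑(mk h.choose : U.GroupUltraproduct Γ) else 0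

lemma withZeroMk_of_eventually_eq_coe {a : ∀ i, WithZero (Γ i)} {b : ∀ i, Γ i}
    (h : ∀ᶠ i in U, a i = b i) : withZeroMk (U := U) a = ↑(mk b : U.GroupUltraproduct Γ) := by
  have hex : ∃ b : ∀ i, Γ i, ∀ᶠ i in U, a i = b i := ⟨b, h⟩
  rw [withZeroMk, dif_pos hex, WithZero.coe_inj, mk_eq_mk_iff]
  filter_upwards [hex.choose_spec, h] with i h1 h2
  exact WithZero.coe_inj.1 (h1.symm.trans h2)

lemma withZeroMk_of_eventually_eq_zero {a : ∀ i, WithZero (Γ i)} (h : ∀ᶠ i in U, a i = 0) :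
    withZeroMk (U := U) a = 0 := by
  refine dif_neg fun ⟨b, hb⟩ => ?_
  obtain ⟨i, h1, h2⟩ := (h.and hb).exists
  exact WithZero.coe_ne_zero (h2.symm.trans h1)

lemma withZeroMk_congr {a b : ∀ i, WithZero (Γ i)} (h : ∀ᶠ i in U, a i = b i) :
    withZeroMk (U := U) a = withZeroMk b := by
  rcases eventually_eq_zero_or_exists_eventually_eq_coe (U := U) a with ha | ⟨c, hc⟩
  · rw [withZeroMk_of_eventually_eq_zero ha, withZeroMk_of_eventually_eq_zero]
    filter_upwards [h, ha] with i h1 h2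
    rw [← h1, h2]
  · rw [withZeroMk_of_eventually_eq_coe hc, withZeroMk_of_eventually_eq_coe]
    filter_upwards [h, hc] with i h1 h2
    rw [← h1, h2]

lemma withZeroMk_zero : withZeroMk (U := U) (fun i => (0 : WithZero (Γ i))) = 0 :=
  withZeroMk_of_eventually_eq_zero (Eventually.of_forall fun _ => rfl)

lemma withZeroMk_one : withZeroMk (U := U) (fun i => (1 : WithZero (Γ i))) = 1 := by
  rw [withZeroMk_of_eventually_eq_coe (b := 1)
    (Eventually.of_forall fun _ => WithZero.coe_one.symm), map_one, WithZero.coe_one]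

lemma withZeroMk_mul (a b : ∀ i, WithZero (Γ i)) :
    withZeroMk (U := U) (fun i => a i * b i) = withZeroMk a * withZeroMk b := by
  rcases eventually_eq_zero_or_exists_eventually_eq_coe (U := U) a with ha | ⟨c, hc⟩
  · rw [withZeroMk_of_eventually_eq_zero ha, zero_mul, withZeroMk_of_eventually_eq_zero]
    filter_upwards [ha] with i hi
    simp [hi]
  rcases eventually_eq_zero_or_exists_eventually_eq_coe (U := U) b with hb | ⟨d, hd⟩
  · rw [withZeroMk_of_eventually_eq_zero hb, mul_zero, withZeroMk_of_eventually_eq_zero]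
    filter_upwards [hb] with i hi
    simp [hi]
  rw [withZeroMk_of_eventually_eq_coe hc, withZeroMk_of_eventually_eq_coe hd, ← WithZero.coe_mul,
    ← map_mul, withZeroMk_of_eventually_eq_coe]
  filter_upwards [hc, hd] with i hci hdi
  simp [hci, hdi]

section Order

variable [∀ i, LinearOrder (Γ i)] [∀ i, IsOrderedMonoid (Γ i)]

lemma withZeroMk_le_withZeroMk_iff {a b : ∀ i, WithZero (Γ i)} :
    withZeroMk (U := U) a ≤ withZeroMk b ↔ ∀ᶠ i in U, a i ≤ b i := by
  rcases eventually_eq_zero_or_exists_eventually_eq_coe (U := U) a with ha | ⟨c, hc⟩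
  · rw [withZeroMk_of_eventually_eq_zero ha]
    simp only [zero_le, true_iff]
    filter_upwards [ha] with i hi
    simp [hi]
  rcases eventually_eq_zero_or_exists_eventually_eq_coe (U := U) b with hb | ⟨d, hd⟩
  · rw [withZeroMk_of_eventually_eq_coe hc, withZeroMk_of_eventually_eq_zero hb]
    simp only [le_zero_iff, WithZero.coe_ne_zero, false_iff]
    intro hab
    obtain ⟨i, h1, h2, h3⟩ := (hab.and (hb.and hc)).exists
    simp [h2, h3] at h1
  rw [withZeroMk_of_eventually_eq_coe hc, withZeroMk_of_eventually_eq_coe hd, WithZero.coe_le_coe,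
    mk_le_mk_iff]
  refine eventually_congr ?_
  filter_upwards [hc, hd] with i hci hdi
  rw [hci, hdi, WithZero.coe_le_coe]

lemma withZeroMk_lt_withZeroMk {a b : ∀ i, WithZero (Γ i)} (h : ∀ᶠ i in U, a i < b i) :
    withZeroMk (U := U) a < withZeroMk b := by
  rw [← not_le, withZeroMk_le_withZeroMk_iff, ← Ultrafilter.eventually_not]
  filter_upwards [h] with i hi
  exact not_le.2 hi

lemma withZeroMk_max (a b : ∀ i, WithZero (Γ i)) :
    withZeroMk (U := U) (fun i => max (a i) (b i)) = max (withZeroMk a) (withZeroMk b) := by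
  rcases U.eventually_or.1 (Eventually.of_forall fun i => le_total (a i) (b i)) with h | h
  · rw [max_eq_right (withZeroMk_le_withZeroMk_iff.2 h)]
    exact withZeroMk_congr (h.mono fun i hi => max_eq_right hi)
  · rw [max_eq_left (withZeroMk_le_withZeroMk_iff.2 h)]
    exact withZeroMk_congr (h.mono fun i hi => max_eq_left hi)

end Order

end GroupUltraproduct

end Ultrafilter

open Ultrafilter.GroupUltraproduct in
theorem statement16_general {R : Type u} [CommSemiring R]
    (S : Set (R × R))
    (hfin : ∀ T ⊆ S, T.Finite → IsAdmissible T) :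
    IsAdmissible S := by
  have hadm : ∀ F : Finset S, IsAdmissible (Subtype.val '' (F : Set S)) := fun F =>
    hfin _ (Subtype.coe_image_subset S _) (F.finite_toSet.image _)
  choose Γ _ _ _ v hv0 hv1 hvmul hvadd hvlt using hadm
  let U := Ultrafilter.of (atTop : Filter (Finset S))
  have hU : ∀ p ∈ S, ∀ᶠ F in U, v F p.2 < v F p.1 := by
    intro p hp
    filter_upwards [Ultrafilter.of_le _ (eventually_ge_atTop {⟨p, hp⟩})] with F hF
    exact hvlt F p ⟨⟨p, hp⟩, Finset.singleton_subset_iff.1 hF, rfl⟩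
  refine ⟨U.GroupUltraproduct Γ, inferInstance, inferInstance, inferInstance,
    fun r => withZeroMk fun F => v F r, ?_, ?_, fun a b => ?_, fun a b => ?_,
    fun p hp => withZeroMk_lt_withZeroMk (hU p hp)⟩
  · simp only [hv0, withZeroMk_zero]
  · simp only [hv1, withZeroMk_one]
  · simp only [hvmul, withZeroMk_mul]
  · simp only [hvadd, withZeroMk_max]

/-- Let `R` be an idempotent semiring and `S ⊆ R × R`.  If every finite
subset of `S` is admissible, then `S` is admissible. -/
theorem statement16 {R : Type u} [CommSemiring R]
    (hidem : ∀ x : R, x + x = x)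
    (S : Set (R × R))
    (hfin : ∀ T ⊆ S, T.Finite → IsAdmissible T) :
    IsAdmissible S :=
  statement16_general S hfin
end

section
/- Let K be a totally ordered idempotent semifield and L an idempotent semifield, and let f : K → L be an injective semiring homomorphism. Then there exist a linearly ordered abelian group Δ and a homomorphism v : L → Δ_max such that the composite v ∘ f : K → Δ_max is injective. -/
/-!
The units of an idempotent semifield `L` form a lattice-ordered abelian group with
`a ⊔ b = a + b`, and `f` maps `Kˣ` onto a totally ordered subgroup `T` of it. By Zorn's lemma
there is a convex ℓ-subgroup `H` maximal among those containing no element `> 1` of `T`. Since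
these elements are closed under `⊓`, maximality makes `H` prime: `a ⊓ b = 1` forces `a ∈ H` or
`b ∈ H`, because then `a ^ m ⊓ b ^ n = 1`. Hence `Lˣ ⧸ H` is totally ordered, the projection turns
`+` into `max`, and it is injective on `T` because `H ∩ T = 1`. Sending `0` to `0` extends it to
`v : L → Δ_max`.
-/

universe u v

namespace LatticeOrderedCommGroup

variable {α : Type u} [CommGroup α] [Lattice α] [IsOrderedMonoid α]

section Disjoint

variable {a b c : α}

lemma inf_mul_le_mul_inf (ha : 1 ≤ a) (hb : 1 ≤ b) (hc : 1 ≤ c) :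
    a ⊓ (b * c) ≤ (a ⊓ b) * (a ⊓ c) := by
  rw [inf_mul, mul_inf, mul_inf]
  refine le_inf (le_inf ?_ ?_) (le_inf ?_ inf_le_right)
  · exact inf_le_left.trans (le_mul_of_one_le_right' ha)
  · exact inf_le_left.trans (le_mul_of_one_le_right' hc)
  · exact inf_le_left.trans (le_mul_of_one_le_left' hb)

lemma inf_mul_eq_one (hab : a ⊓ b = 1) (hac : a ⊓ c = 1) : a ⊓ (b * c) = 1 := by
  have ha : 1 ≤ a := hab ▸ inf_le_left
  have hb : 1 ≤ b := hab ▸ inf_le_right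
  have hc : 1 ≤ c := hac ▸ inf_le_right
  refine le_antisymm ?_ (le_inf ha (one_le_mul hb hc))
  simpa [hab, hac] using inf_mul_le_mul_inf ha hb hc

lemma inf_pow_eq_one (hab : a ⊓ b = 1) (n : ℕ) : a ⊓ b ^ n = 1 := by
  induction n with
  | zero => simpa using (hab ▸ inf_le_left : 1 ≤ a)
  | succ n ih => rw [pow_succ]; exact inf_mul_eq_one ih hab

lemma pow_inf_pow_eq_one (hab : a ⊓ b = 1) (m n : ℕ) : a ^ m ⊓ b ^ n = 1 :=
  inf_pow_eq_one (by rw [inf_comm]; exact inf_pow_eq_one (by rwa [inf_comm]) m) n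

end Disjoint

/-- Multiplicative version of `LatticeOrderedAddCommGroup.IsSolid`; the solid subgroups are the
convex ℓ-subgroups. -/
def IsSolid (s : Set α) : Prop := ∀ ⦃x⦄, x ∈ s → ∀ ⦃y⦄, |y|ₘ ≤ |x|ₘ → y ∈ s

lemma IsSolid.mem_of_le {s : Set α} (hs : IsSolid s) {x y : α} (hx : 1 ≤ x) (hxy : x ≤ y)
    (hy : y ∈ s) : x ∈ s :=
  hs hy (mabs_le_mabs_of_one_le hx hxy)

lemma isSolid_bot : IsSolid ((⊥ : Subgroup α) : Set α) := by
  intro x hx y hy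
  rw [SetLike.mem_coe, Subgroup.mem_bot] at hx ⊢
  subst hx
  rw [mabs_one] at hy
  exact le_antisymm ((le_mabs_self y).trans hy) (inv_le_one'.1 ((inv_le_mabs y).trans hy))

/-- The convex ℓ-subgroup generated by `H` and `g`, when `H` is solid and `1 ≤ g`. -/
def solidAdjoin (H : Subgroup α) (g : α) : Subgroup α where
  carrier := {x | ∃ h ∈ H, 1 ≤ h ∧ ∃ n : ℕ, |x|ₘ ≤ h * g ^ n}
  one_mem' := ⟨1, H.one_mem, le_rfl, 0, by simp⟩
  mul_mem' := by
    rintro x y ⟨h, hH, h1, m, hx⟩ ⟨k, kH, k1, n, hy⟩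
    refine ⟨h * k, H.mul_mem hH kH, one_le_mul h1 k1, m + n, ?_⟩
    calc |x * y|ₘ ≤ |x|ₘ * |y|ₘ := mabs_mul_le x y
      _ ≤ h * g ^ m * (k * g ^ n) := mul_le_mul' hx hy
      _ = h * k * g ^ (m + n) := by rw [pow_add, mul_mul_mul_comm]
  inv_mem' := by
    rintro x ⟨h, hH, h1, n, hx⟩
    exact ⟨h, hH, h1, n, by rwa [mabs_inv]⟩

variable {H : Subgroup α}

lemma isSolid_solidAdjoin (g : α) : IsSolid (solidAdjoin H g : Set α) := by
  rintro x ⟨h, hH, h1, n, hx⟩ y hy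
  exact ⟨h, hH, h1, n, hy.trans hx⟩

lemma le_solidAdjoin (hH : IsSolid (H : Set α)) (g : α) : H ≤ solidAdjoin H g := fun x hx =>
  ⟨|x|ₘ, hH hx (mabs_mabs x).le, one_le_mabs x, 0, by simp⟩

lemma mem_solidAdjoin_self {g : α} (hg : 1 ≤ g) : g ∈ solidAdjoin H g :=
  ⟨1, H.one_mem, le_rfl, 1, by simp [mabs_of_one_le hg]⟩

section Avoiding

variable {S : Set α}

theorem exists_maximal_isSolid_disjoint (hS : 1 ∉ S) :
    ∃ H : Subgroup α,
      Maximal (fun K : Subgroup α => IsSolid (K : Set α) ∧ Disjoint (K : Set α) S) H := by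
  refine (zorn_le_nonempty₀ {K : Subgroup α | IsSolid (K : Set α) ∧ Disjoint (K : Set α) S}
    (fun c hc hchain K hK => ?_) ⊥ ⟨isSolid_bot, by simpa using hS⟩).imp fun H hH => hH.2
  have mem_sSup : ∀ {x}, x ∈ sSup c ↔ ∃ K ∈ c, x ∈ K :=
    Subgroup.mem_sSup_of_directedOn ⟨K, hK⟩ hchain.directedOn
  refine ⟨sSup c, ⟨?_, ?_⟩, fun K hK => le_sSup hK⟩
  · intro x hx y hy
    obtain ⟨K, hK, hxK⟩ := mem_sSup.1 hx
    exact mem_sSup.2 ⟨K, hK, (hc hK).1 hxK hy⟩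
  · refine Set.disjoint_left.2 fun x hx => ?_
    obtain ⟨K, hK, hxK⟩ := mem_sSup.1 hx
    exact Set.disjoint_left.1 (hc hK).2 hxK

variable (hH : Maximal (fun K : Subgroup α => IsSolid (K : Set α) ∧ Disjoint (K : Set α) S) H)
include hH

lemma exists_le_mul_pow_of_notMem (hS : ∀ s ∈ S, 1 ≤ s) {g : α} (hg : 1 ≤ g) (hgH : g ∉ H) :
    ∃ s ∈ S, ∃ h ∈ H, 1 ≤ h ∧ ∃ n : ℕ, s ≤ h * g ^ n := by
  by_contra! hdisj
  refine hgH (hH.2 ⟨isSolid_solidAdjoin g, Set.disjoint_left.2 ?_⟩ (le_solidAdjoin hH.1.1 g)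
    (mem_solidAdjoin_self hg))
  rintro s ⟨h, hh, h1, n, hs⟩ hsS
  exact hdisj s hsS h hh h1 n (by rwa [mabs_of_one_le (hS s hsS)] at hs)

/-- Maximality makes `H` a prime subgroup. -/
theorem mem_or_mem_of_inf_eq_one (hS : ∀ s ∈ S, 1 ≤ s) (hS_inf : ∀ s ∈ S, ∀ t ∈ S, s ⊓ t ∈ S)
    {a b : α} (hab : a ⊓ b = 1) : a ∈ H ∨ b ∈ H := by
  by_contra! hne
  obtain ⟨s, hs, h, hh, h1, m, hsa⟩ :=
    exists_le_mul_pow_of_notMem hH hS (hab ▸ inf_le_left) hne.1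
  obtain ⟨t, ht, k, hk, k1, n, htb⟩ :=
    exists_le_mul_pow_of_notMem hH hS (hab ▸ inf_le_right) hne.2
  have hst : s ⊓ t ≤ h * k :=
    calc s ⊓ t ≤ h * k * a ^ m ⊓ h * k * b ^ n :=
          inf_le_inf (hsa.trans (mul_le_mul_left (le_mul_of_one_le_right' k1) _))
            (htb.trans (mul_le_mul_left (le_mul_of_one_le_left' h1) _))
      _ = h * k := by rw [← mul_inf, pow_inf_pow_eq_one hab, mul_one]
  exact Set.disjoint_left.1 hH.1.2
    (hH.1.1.mem_of_le (le_inf (hS s hs) (hS t ht)) hst (H.mul_mem hh hk)) (hS_inf s hs t ht)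

end Avoiding

section Quotient

def quotientCone (hH : IsSolid (H : Set α)) : GroupCone (α ⧸ H) where
  toSubmonoid := (Submonoid.oneLE α).map (QuotientGroup.mk' H)
  eq_one_of_mem_of_inv_mem' := by
    rintro _ ⟨x, hx, rfl⟩ ⟨y, hy, hyx⟩
    have hxy : x * y ∈ H := by
      rw [← QuotientGroup.eq_one_iff, QuotientGroup.mk_mul]
      exact mul_eq_one_iff_eq_inv'.2 hyx
    exact (QuotientGroup.eq_one_iff x).2 (hH.mem_of_le hx (le_mul_of_one_le_right' hy) hxy)

variable (hH : IsSolid (H : Set α))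

lemma hasMemOrInvMem_quotientCone (hprime : ∀ a b : α, a ⊓ b = 1 → a ∈ H ∨ b ∈ H) :
    HasMemOrInvMem (quotientCone hH) where
  mem_or_inv_mem := by
    intro z
    obtain ⟨x, rfl⟩ := QuotientGroup.mk_surjective z
    have hx : ((x⁺ᵐ : α) : α ⧸ H) / (x⁻ᵐ : α) = x := by
      rw [← QuotientGroup.mk_div, oneLePart_div_leOnePart]
    rcases hprime _ _ (oneLePart_inf_leOnePart_eq_one x) with h | h
    · refine Or.inr ⟨x⁻ᵐ, one_le_leOnePart x, ?_⟩
      rw [← hx, (QuotientGroup.eq_one_iff _).2 h, one_div, inv_inv]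
      rfl
    · refine Or.inl ⟨x⁺ᵐ, one_le_oneLePart x, ?_⟩
      rw [← hx, (QuotientGroup.eq_one_iff _).2 h, div_one]
      rfl

lemma mk_sup_eq_of_div_mem {a b : α} (hab : (b : α ⧸ H) / a ∈ quotientCone hH) :
    ((a ⊔ b : α) : α ⧸ H) = b := by
  obtain ⟨z, hz, hzab⟩ := hab
  rw [← QuotientGroup.mk_div] at hzab
  obtain ⟨h, hh, hzh⟩ : ∃ h ∈ H, b / a = z * h :=
    ⟨z⁻¹ * (b / a), QuotientGroup.eq.1 hzab, by rw [mul_inv_cancel_left]⟩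
  have hpos : (a / b)⁺ᵐ ∈ H := by
    refine hH.mem_of_le (one_le_oneLePart _) (sup_le ?_ (one_le_mabs h)) (hH hh (mabs_mabs h).le)
    calc a / b = z⁻¹ * h⁻¹ := by rw [← inv_div, hzh, mul_inv]
      _ ≤ h⁻¹ := mul_le_of_le_one_left' (inv_le_one'.2 hz)
      _ ≤ |h|ₘ := inv_le_mabs h
  rw [sup_eq_mul_oneLePart_div, QuotientGroup.mk_mul, (QuotientGroup.eq_one_iff _).2 hpos, mul_one]

end Quotient

theorem exists_linearOrder_quotient_injOn {T : Subgroup α} (hT : IsChain (· ≤ ·) (T : Set α)) :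
    ∃ (Δ : Type u) (_ : CommGroup Δ) (_ : LinearOrder Δ) (_ : IsOrderedMonoid Δ) (q : α →* Δ),
      (∀ a b, q (a ⊔ b) = max (q a) (q b)) ∧ Set.InjOn q T := by
  classical
  set S : Set α := {s | s ∈ T ∧ 1 < s}
  have hS : ∀ s ∈ S, 1 ≤ s := fun s hs => hs.2.le
  have hS_inf : ∀ s ∈ S, ∀ t ∈ S, s ⊓ t ∈ S := by
    intro s hs t ht
    rcases hT.total hs.1 ht.1 with h | h
    · rwa [inf_eq_left.2 h]
    · rwa [inf_eq_right.2 h]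
  obtain ⟨H, hH⟩ := exists_maximal_isSolid_disjoint (S := S) fun h => lt_irrefl _ h.2
  have hsolid := hH.1.1
  have := hasMemOrInvMem_quotientCone hsolid fun a b => mem_or_mem_of_inf_eq_one hH hS hS_inf
  let := LinearOrder.mkOfGroupCone (quotientCone hsolid)
  refine ⟨α ⧸ H, inferInstance, inferInstance, IsOrderedMonoid.mkOfCone (quotientCone hsolid),
    QuotientGroup.mk' H, fun a b => ?_, fun u hu w hw huw => ?_⟩
  · simp only [QuotientGroup.mk'_apply]
    rcases le_total (a : α ⧸ H) b with h | h
    · rw [max_eq_right h]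
      exact mk_sup_eq_of_div_mem hsolid h
    · rw [max_eq_left h, sup_comm]
      exact mk_sup_eq_of_div_mem hsolid h
  · have huwH : u / w ∈ H := QuotientGroup.eq_iff_div_mem.1 huw
    have huwT : u / w ∈ T := T.div_mem hu hw
    rw [← div_eq_one]
    by_contra hne
    rcases hT.total huwT T.one_mem with h | h
    · exact Set.disjoint_left.1 hH.1.2 (H.inv_mem huwH)
        ⟨T.inv_mem huwT, one_lt_inv'.2 (h.lt_of_ne hne)⟩
    · exact Set.disjoint_left.1 hH.1.2 huwH ⟨huwT, h.lt_of_ne' hne⟩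

end LatticeOrderedCommGroup

class IdemSemifield (α : Type*) extends Semifield α, IdemCommSemiring α

noncomputable abbrev IdemSemifield.ofCommSemiring {α : Type*} [CommSemiring α] [Nontrivial α]
    (hidem : ∀ x : α, x + x = x) (hunits : ∀ x : α, x ≠ 0 → IsUnit x) : IdemSemifield α :=
  { ‹CommSemiring α›, IdemSemiring.ofSemiring hidem,
    commGroupWithZeroOfIsUnitOrEqZero fun a => or_iff_not_imp_right.2 (hunits a) with
    nnqsmul := _
    nnqsmul_def := fun _ _ => rfl }

instance IdemCommSemiring.toIsOrderedMonoid {α : Type*} [IdemCommSemiring α] :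
    IsOrderedMonoid α where
  mul_le_mul_left _ _ h c := mul_le_mul_left h c

theorem injective_of_injective_units {K M : Type*} [MonoidWithZero K] {g : K → M}
    (hK : ∀ x : K, x ≠ 0 → IsUnit x) (h0 : ∀ x, g x = g 0 → x = 0)
    (hu : Function.Injective fun u : Kˣ => g u) : Function.Injective g := by
  intro x y hxy
  rcases eq_or_ne x 0 with rfl | hx
  · exact (h0 y hxy.symm).symm
  rcases eq_or_ne y 0 with rfl | hy
  · exact h0 x hxy
  obtain ⟨a, rfl⟩ := hK x hx
  obtain ⟨b, rfl⟩ := hK y hy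
  exact congrArg Units.val (hu hxy)

namespace IdemSemifield

variable {L : Type*} [IdemSemifield L]

noncomputable instance : SemilatticeSup Lˣ where
  sup a b := Units.mk0 (a + b) fun h => a.ne_zero (add_eq_zero.1 h).1
  le_sup_left _ _ := Units.val_le_val.1 le_self_add
  le_sup_right _ _ := Units.val_le_val.1 le_add_self
  sup_le _ _ _ hac hbc := Units.val_le_val.1 (add_le hac hbc)

lemma units_val_sup (a b : Lˣ) : ((a ⊔ b : Lˣ) : L) = a + b := rfl

noncomputable instance : Lattice Lˣ where
  inf a b := (a⁻¹ ⊔ b⁻¹)⁻¹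
  inf_le_left _ _ := inv_le'.2 le_sup_left
  inf_le_right _ _ := inv_le'.2 le_sup_right
  le_inf _ _ _ hca hcb := le_inv'.2 (sup_le (inv_le_inv_iff.2 hca) (inv_le_inv_iff.2 hcb))

lemma isChain_range_unitsMap {K : Type*} [CommSemiring K]
    (hK : ∀ x y : K, x + y = y ∨ x + y = x) (f : K →+* L) :
    IsChain (· ≤ ·) ((Units.map (f : K →* L)).range : Set Lˣ) := by
  rintro _ ⟨a, rfl⟩ _ ⟨b, rfl⟩ -
  simp only [← Units.val_le_val, Units.coe_map, MonoidHom.coe_coe]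
  rcases hK a b with h | h
  · exact Or.inl (add_eq_right_iff_le.1 (by rw [← map_add, h]))
  · exact Or.inr (add_eq_right_iff_le.1 (by rw [← map_add, add_comm, h]))

variable {Δ : Type*} [CommGroup Δ]

open scoped Classical in
noncomputable def extendUnitsHom (q : Lˣ →* Δ) : L →*₀ WithZero Δ :=
  (WithZero.map' q).comp WithZero.withZeroUnitsEquiv.symm.toMonoidWithZeroHom

lemma extendUnitsHom_units (q : Lˣ →* Δ) (u : Lˣ) : extendUnitsHom q u = q u := by
  simp [extendUnitsHom]

lemma extendUnitsHom_add [LinearOrder Δ] {q : Lˣ →* Δ} (hq : ∀ a b, q (a ⊔ b) = max (q a) (q b))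
    (x y : L) :
    extendUnitsHom q (x + y) = max (extendUnitsHom q x) (extendUnitsHom q y) := by
  rcases eq_or_ne x 0 with rfl | hx
  · simp
  rcases eq_or_ne y 0 with rfl | hy
  · simp
  obtain ⟨a, rfl⟩ := hx.isUnit
  obtain ⟨b, rfl⟩ := hy.isUnit
  rw [← units_val_sup, extendUnitsHom_units, extendUnitsHom_units, extendUnitsHom_units, hq]
  exact Monotone.map_max fun _ _ => WithZero.coe_le_coe.2

lemma injective_extendUnitsHom_comp {K : Type*} [CommSemiring K]
    (hK : ∀ x : K, x ≠ 0 → IsUnit x) {f : K →+* L} (hf : Function.Injective f) {q : Lˣ →* Δ}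
    (hq : Set.InjOn q (Units.map (f : K →* L)).range) :
    Function.Injective fun x : K => extendUnitsHom q (f x) := by
  refine injective_of_injective_units hK (fun x hx => ?_) fun a b hab => ?_
  · rwa [map_zero, map_zero, map_eq_zero, map_eq_zero_iff f hf] at hx
  · have hunits (u : Kˣ) : extendUnitsHom q (f u) = q (Units.map (f : K →* L) u) :=
      extendUnitsHom_units q (Units.map (f : K →* L) u)
    simp only [hunits, WithZero.coe_inj] at hab
    exact Units.map_injective hf (hq ⟨a, rfl⟩ ⟨b, rfl⟩ hab)

end IdemSemifield

theorem statement17_general {K : Type u} {L : Type v} [CommSemiring K] [CommSemiring L]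
    [Nontrivial L]
    (hLidem : ∀ x : L, x + x = x)
    (hKunits : ∀ x : K, x ≠ 0 → IsUnit x) (hLunits : ∀ x : L, x ≠ 0 → IsUnit x)
    (hKtotal : ∀ x y : K, x + y = y ∨ x + y = x)
    (f : K →+* L) (hf : Function.Injective f) :
    ∃ (Δ : Type v) (_ : CommGroup Δ) (_ : LinearOrder Δ) (_ : IsOrderedMonoid Δ) (v : L → WithZero Δ),
      v 0 = 0 ∧ v 1 = 1 ∧ (∀ a b, v (a * b) = v a * v b) ∧
      (∀ a b, v (a + b) = max (v a) (v b)) ∧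
      Function.Injective fun x : K => v (f x) := by
  let := IdemSemifield.ofCommSemiring hLidem hLunits
  obtain ⟨Δ, instGroup, instOrder, instOrdered, q, hq_sup, hq_inj⟩ :=
    LatticeOrderedCommGroup.exists_linearOrder_quotient_injOn
      (IdemSemifield.isChain_range_unitsMap hKtotal f)
  exact ⟨Δ, instGroup, instOrder, instOrdered, IdemSemifield.extendUnitsHom q, map_zero _,
    map_one _, map_mul _, IdemSemifield.extendUnitsHom_add hq_sup,
    IdemSemifield.injective_extendUnitsHom_comp hKunits hf hq_inj⟩

/-- Let `K` be a totally ordered idempotent semifield and `L` an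
idempotent semifield, with `f : K → L` an injective semiring homomorphism.  Then there
exist a linearly ordered abelian group `Δ` and a homomorphism `v : L → Δ_max` (with
`Δ_max = WithZero Δ`, addition being `max`) such that `v ∘ f` is injective. -/
theorem statement17 {K : Type u} {L : Type v} [CommSemiring K] [CommSemiring L]
    [Nontrivial K] [Nontrivial L]
    (hKidem : ∀ x : K, x + x = x) (hLidem : ∀ x : L, x + x = x)
    (hKunits : ∀ x : K, x ≠ 0 → IsUnit x) (hLunits : ∀ x : L, x ≠ 0 → IsUnit x)
    (hKtotal : ∀ x y : K, x + y = y ∨ x + y = x)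
    (f : K →+* L) (hf : Function.Injective f) :
    ∃ (Δ : Type v) (_ : CommGroup Δ) (_ : LinearOrder Δ) (_ : IsOrderedMonoid Δ) (v : L → WithZero Δ),
      v 0 = 0 ∧ v 1 = 1 ∧ (∀ a b, v (a * b) = v a * v b) ∧
      (∀ a b, v (a + b) = max (v a) (v b)) ∧
      Function.Injective fun x : K => v (f x) :=
  statement17_general hLidem hKunits hLunits hKtotal f hf
end
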